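/- arXiv:1507.07010 — 5 statements merged into one kernel-verified Lean document; each statement's English description precedes it below -/
import Mathlib

section
/- Let (X,𝒳,μ) be a probability space and let f, g be commuting measure-preserving transformations on X such that μ({x : f(x) = g(x)}) = 0. Then for every measurable set Y and every ε > 0, there exists a measurable set B ⊆ f⁻¹(Y) with μ(B) ≥ (μ(Y) − ε)/4 and f⁻¹(B) ∩ g⁻¹(B) = ∅. -/
/-! Encode points by a measurable injection `φ : X → ℕ → Bool`. Off the null set `{f = g}` the
codes of `f x` and `g x` differ, so outside a set of measure `< ε` they already differ in their
first `N` bits. Colouring the `2 ^ N` possible prefixes at random, `f x` and `g x` get different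
colours with probability `1 / 2`, so some colouring `c` separates them on half of `f⁻¹ Y`, up to `ε`.
One of the two halves `{c (f x) = b, c (g x) = !b}` carries a quarter, and such a set `B` has
`f⁻¹ B ∩ g⁻¹ B = ∅`: for `x` in it, `c (g (f x)) = !b` while `c (f (g x)) = b`. -/

open MeasureTheory ENNReal

open Finset in
theorem card_fun_bool_eq_two_mul_card_apply_ne {α : Type*} [Fintype α] [DecidableEq α]
    {a b : α} (hab : a ≠ b) :
    Fintype.card (α → Bool) = 2 * #{c : α → Bool | c a ≠ c b} := by
  let flip (c : α → Bool) : α → Bool := Function.update c a (!c a)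
  have hflip : Function.Involutive flip := fun c => by simp [flip]
  have h : #{c : α → Bool | c a = c b} = #{c : α → Bool | c a ≠ c b} :=
    card_nbij' flip flip (fun c => by simp [flip, Function.update_of_ne hab.symm])
      (fun c => by simp [flip, Function.update_of_ne hab.symm, Bool.eq_not])
      (fun c _ => hflip c) (fun c _ => hflip c)
  rw [← card_univ, ← card_filter_add_card_filter_not (fun c : α → Bool => c a = c b), h, two_mul]

open Finset Classical in
theorem exists_measure_univ_le_mul_measure_of_card_le {X ι : Type*} [MeasurableSpace X]
    [Fintype ι] [Nonempty ι] (ν : Measure X) {S : ι → Set X} (hS : ∀ i, MeasurableSet (S i))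
    (k : ℕ) (hk : ∀ᵐ x ∂ν, Fintype.card ι ≤ k * #{i | x ∈ S i}) :
    ∃ i, ν Set.univ ≤ k * ν (S i) := by
  have hcount (x : X) : ((#{i | x ∈ S i} : ℕ) : ℝ≥0∞) = ∑ i, (S i).indicator 1 x := by
    rw [card_filter]
    push_cast
    simp only [Set.indicator_apply, Pi.one_apply]
  obtain ⟨i, -, hi⟩ := ENNReal.exists_le_of_sum_le (s := univ) univ_nonempty <|
    calc ∑ _ : ι, ν Set.univ = ∫⁻ _, (Fintype.card ι : ℝ≥0∞) ∂ν := by simp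
      _ ≤ ∫⁻ x, (k : ℝ≥0∞) * (#{i | x ∈ S i} : ℕ) ∂ν :=
        lintegral_mono_ae <| hk.mono fun x hx => by exact_mod_cast hx
      _ = ∑ i, (k : ℝ≥0∞) * ν (S i) := by
        simp_rw [hcount, mul_sum]
        rw [lintegral_finsetSum _ fun i _ => (measurable_one.indicator (hS i)).const_mul _]
        simp_rw [lintegral_const_mul _ (measurable_one.indicator (hS _)),
          lintegral_indicator_one (hS _)]
  exact ⟨i, hi⟩

theorem exists_coloring_measure_univ_le_two_mul {X α : Type*} [MeasurableSpace X]
    [Fintype α] [DecidableEq α] [MeasurableSpace α] [MeasurableSingletonClass α]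
    (ν : Measure X) {u v : X → α} (hu : Measurable u) (hv : Measurable v)
    (huv : ∀ᵐ x ∂ν, u x ≠ v x) :
    ∃ c : α → Bool, ν Set.univ ≤ 2 * ν {x | c (u x) ≠ c (v x)} := by
  refine exists_measure_univ_le_mul_measure_of_card_le ν
    (S := fun c : α → Bool => {x | c (u x) ≠ c (v x)}) (fun c => (measurableSet_eq_fun (Measurable.of_discrete.comp hu)
      (Measurable.of_discrete.comp hv)).compl) 2 ?_
  filter_upwards [huv] with x hx
  rw [card_fun_bool_eq_two_mul_card_apply_ne hx]
  exact le_of_eq (by congr)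

theorem preimage_inter_preimage_eq_empty_of_comp_comm {X β : Type*} {f g : X → X}
    (hcomm : f ∘ g = g ∘ f) {χ : X → β} {b b' : β} (hb : b ≠ b') {B : Set X}
    (hB : ∀ x ∈ B, χ (f x) = b ∧ χ (g x) = b') :
    f ⁻¹' B ∩ g ⁻¹' B = ∅ := by
  refine Set.eq_empty_of_forall_notMem fun x ⟨hfx, hgx⟩ => hb ?_
  calc b = χ (f (g x)) := (hB _ hgx).1.symm
    _ = χ (g (f x)) := congrArg χ (congrFun hcomm x)
    _ = b' := (hB _ hfx).2

theorem exists_subset_preimage_inter_preimage_eq_empty_of_comp_comm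
    {X : Type*} [MeasurableSpace X] (μ : Measure X) {f g : X → X} (hf : Measurable f)
    (hg : Measurable g) (hcomm : f ∘ g = g ∘ f) {K : Set X} (hK : MeasurableSet K)
    {χ : X → Bool} (hχ : Measurable χ) :
    ∃ B ⊆ K, MeasurableSet B ∧ μ (K ∩ {x | χ (f x) ≠ χ (g x)}) ≤ 2 * μ B ∧
      f ⁻¹' B ∩ g ⁻¹' B = ∅ := by
  let B (b : Bool) : Set X := K ∩ {x | χ (f x) = b ∧ χ (g x) = !b}
  have hBm (b : Bool) : MeasurableSet (B b) :=
    hK.inter (((hχ.comp hf) (measurableSet_singleton b)).inter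
      ((hχ.comp hg) (measurableSet_singleton !b)))
  have hcover : μ (K ∩ {x | χ (f x) ≠ χ (g x)}) ≤ μ (B true) + μ (B false) := by
    refine (measure_mono fun x hx => ?_).trans (measure_union_le _ _)
    obtain ⟨hxK, hx⟩ := hx
    cases hfx : χ (f x) <;> cases hgx : χ (g x) <;> simp_all [B]
  have hdisj (b : Bool) : f ⁻¹' B b ∩ g ⁻¹' B b = ∅ :=
    preimage_inter_preimage_eq_empty_of_comp_comm hcomm (Bool.not_ne_self b).symm fun _ hx => hx.2
  rcases le_total (μ (B true)) (μ (B false)) with h | h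
  · exact ⟨B false, Set.inter_subset_left, hBm _, hcover.trans (by rw [two_mul]; gcongr), hdisj _⟩
  · exact ⟨B true, Set.inter_subset_left, hBm _, hcover.trans (by rw [two_mul]; gcongr), hdisj _⟩

theorem exists_lt_measure_inter_setOf_restrict_ne {X β : Type*} [MeasurableSpace X]
    (μ : Measure X) {u v : X → ℕ → β} {E : Set X} {c : ℝ≥0∞}
    (hc : c < μ (E ∩ {x | u x ≠ v x})) :
    ∃ N : ℕ, c < μ (E ∩ {x | (fun i : Fin N => u x i) ≠ fun i : Fin N => v x i}) := by
  let K (N : ℕ) : Set X := E ∩ {x | (fun i : Fin N => u x i) ≠ fun i : Fin N => v x i}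
  have hmono : Monotone K := fun N M hNM x ⟨hx, hne⟩ =>
    ⟨hx, fun heq => hne (funext fun i => congrFun heq ⟨i, i.2.trans_le hNM⟩)⟩
  have hunion : ⋃ N, K N = E ∩ {x | u x ≠ v x} := by
    ext x
    simp only [K, Set.mem_iUnion, Set.mem_inter_iff, Set.mem_ofPred_eq, Function.ne_iff]
    constructor
    · rintro ⟨N, hx, i, hi⟩
      exact ⟨hx, i, hi⟩
    · rintro ⟨hx, n, hn⟩
      exact ⟨n + 1, hx, ⟨n, n.lt_succ_self⟩, hn⟩
  have hK := tendsto_measure_iUnion_atTop (μ := μ) hmono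
  rw [hunion] at hK
  exact (hK.eventually (eventually_gt_nhds hc)).exists

theorem exists_measurableSet_preimage_inter_preimage_eq_empty {X : Type*} [MeasurableSpace X]
    [MeasurableSpace.CountablySeparated X] (μ : Measure X) {f g : X → X} (hf : Measurable f)
    (hg : Measurable g) (hcomm : f ∘ g = g ∘ f) {E : Set X} (hE : MeasurableSet E) {c : ℝ≥0∞}
    (hc : c < μ (E \ {x | f x = g x})) :
    ∃ B ⊆ E, MeasurableSet B ∧ c ≤ 4 * μ B ∧ f ⁻¹' B ∩ g ⁻¹' B = ∅ := by
  obtain ⟨φ, hφ, hφinj⟩ := MeasurableSpace.measurable_injection_nat_bool_of_countablySeparated X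
  have hEφ : E \ {x | f x = g x} = E ∩ {x | φ (f x) ≠ φ (g x)} := by
    ext x
    simp [hφinj.ne_iff]
  obtain ⟨N, hN⟩ := exists_lt_measure_inter_setOf_restrict_ne μ (hEφ ▸ hc)
  let σ (y : X) : Fin N → Bool := fun i => φ y i
  have hσ : Measurable σ := measurable_pi_lambda _ fun i => (measurable_pi_apply _).comp hφ
  set K := E ∩ {x | σ (f x) ≠ σ (g x)}
  have hK : MeasurableSet K :=
    hE.inter (measurableSet_eq_fun (hσ.comp hf) (hσ.comp hg)).compl
  obtain ⟨col, hcol⟩ := exists_coloring_measure_univ_le_two_mul (μ.restrict K) (hσ.comp hf)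
    (hσ.comp hg) (ae_restrict_of_forall_mem hK fun x hx => hx.2)
  have hχ : Measurable (col ∘ σ) := Measurable.of_discrete.comp hσ
  obtain ⟨B, hBK, hB, hμB, hdisj⟩ :=
    exists_subset_preimage_inter_preimage_eq_empty_of_comp_comm μ hf hg hcomm hK hχ
  refine ⟨B, hBK.trans Set.inter_subset_left, hB, ?_, hdisj⟩
  have hS : MeasurableSet {x | col (σ (f x)) ≠ col (σ (g x))} :=
    (measurableSet_eq_fun (hχ.comp hf) (hχ.comp hg)).compl
  calc c ≤ μ K := hN.le
    _ = μ.restrict K Set.univ := (Measure.restrict_apply_univ K).symm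
    _ ≤ 2 * μ.restrict K {x | col (σ (f x)) ≠ col (σ (g x))} := hcol
    _ = 2 * μ (K ∩ {x | col (σ (f x)) ≠ col (σ (g x))}) := by
      rw [Measure.restrict_apply hS, Set.inter_comm]
    _ ≤ 2 * (2 * μ B) := by gcongr; exact hμB
    _ = 4 * μ B := by rw [← mul_assoc]; norm_num

theorem stmt_0_general {X : Type*} [MeasurableSpace X] [StandardBorelSpace X]
    (μ : Measure X) [IsProbabilityMeasure μ]
    (f g : X → X)
    (hf : MeasurePreserving f μ μ) (hg : MeasurePreserving g μ μ)
    (hcomm : f ∘ g = g ∘ f)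
    (hfg : μ {x | f x = g x} = 0)
    (Y : Set X) (hY : MeasurableSet Y) (ε : ℝ≥0∞) (hε : 0 < ε) :
    ∃ B : Set X, MeasurableSet B ∧ B ⊆ f ⁻¹' Y ∧
      (μ Y - ε) / 4 ≤ μ B ∧ f ⁻¹' B ∩ g ⁻¹' B = ∅ := by
  rcases eq_or_ne (μ Y) 0 with hY0 | hY0
  · exact ⟨∅, .empty, Set.empty_subset _, by simp [hY0], by simp⟩
  have hlt : μ Y - ε < μ (f ⁻¹' Y \ {x | f x = g x}) := by
    rw [measure_sdiff_null hfg, hf.measure_preimage hY.nullMeasurableSet]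
    exact ENNReal.sub_lt_self (measure_ne_top μ Y) hY0 hε.ne'
  obtain ⟨B, hBY, hB, hμB, hdisj⟩ := exists_measurableSet_preimage_inter_preimage_eq_empty μ
    hf.measurable hg.measurable hcomm (hf.measurable hY) hlt
  exact ⟨B, hB, hBY, ENNReal.div_le_of_le_mul (by rwa [mul_comm]), hdisj⟩

theorem stmt_0 {X : Type*} [MeasurableSpace X] [StandardBorelSpace X]
    (μ : Measure X) [IsProbabilityMeasure μ] [NullSingletonClass μ]
    (f g : X → X)
    (hf : MeasurePreserving f μ μ) (hg : MeasurePreserving g μ μ)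
    (hcomm : f ∘ g = g ∘ f)
    (hfg : μ {x | f x = g x} = 0)
    (Y : Set X) (hY : MeasurableSet Y) (ε : ℝ≥0∞) (hε : 0 < ε) :
    ∃ B : Set X, MeasurableSet B ∧ B ⊆ f ⁻¹' Y ∧
      (μ Y - ε) / 4 ≤ μ B ∧ f ⁻¹' B ∩ g ⁻¹' B = ∅ :=
  stmt_0_general μ f g hf hg hcomm hfg Y hY ε hε
end

section
/- Let f be a free measure-preserving action of ℕ₀^d on an atomless standard probability space (X,𝒳,μ), let n ∈ ℕ^d, and let Y ∈ 𝒳. Then there exists N ∈ ℕ₀^d and a measurable set B ⊆ f_N⁻¹(Y) that is n-admissible (i.e., the sets f_k⁻¹(B) for 0 ≤ k < n coordinatewise are pairwise disjoint) and satisfies μ(B) ≥ μ(Y) / 5^{C(π(n),2)}, where π(n) = n(1)⋯n(d) and C(m,2) = m(m−1)/2. -/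
/-!
Take `N = 0` and treat the `C(π(n), 2)` pairs `k ≠ l` of the box one after the other, each time
shrinking `B` by at most a factor `5` so that `f k ⁻¹' B` and `f l ⁻¹' B` become disjoint; shrinking
keeps the disjointness already achieved. For a single pair, `f k` and `f l` commute and differ
almost everywhere, so in a standard Borel space they already differ on the first `s` bits of
a countable separating family, for `s` large, outside a set of small measure. Colouring points by a
Boolean function `g` of their bit pattern and keeping `x` with `g (f k x) = false` and
`g (f l x) = true` gives a set whose preimages are disjoint by commutativity. A point whose two
bit patterns differ survives a quarter of all colourings, so averaging over `g`, together with the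
small exceptional set, shows that some `g` keeps a fifth of `B`.
-/

open MeasureTheory MeasurableSpace Function Finset Filter Topology
open scoped ENNReal

lemma card_fun_bool_le_four_mul_card_filter {P : Type*} [Fintype P] [DecidableEq P] {a b : P}
    (hab : a ≠ b) :
    Fintype.card (P → Bool) ≤ 4 * #{g : P → Bool | g a = false ∧ g b = true} := by
  let normalize (g : P → Bool) : {g : P → Bool // g a = false ∧ g b = true} :=
    ⟨update (update g a false) b true, by simp [update_of_ne hab]⟩
  have hinj : Injective fun g => (normalize g, g a, g b) := by
    intro g g' h
    simp only [Prod.mk.injEq, Subtype.mk.injEq, normalize] at h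
    obtain ⟨hupd, ha, hb⟩ := h
    funext p
    by_cases hpa : p = a
    · rwa [hpa]
    by_cases hpb : p = b
    · rwa [hpb]
    simpa [update_of_ne hpa, update_of_ne hpb] using congrFun hupd p
  calc Fintype.card (P → Bool)
      ≤ Fintype.card ({g : P → Bool // g a = false ∧ g b = true} × Bool × Bool) :=
        Fintype.card_le_of_injective _ hinj
    _ = 4 * #{g : P → Bool | g a = false ∧ g b = true} := by
        simp [Fintype.card_subtype, mul_comm]

lemma disjoint_preimage_setOf_of_commute {α : Type*} {φ ψ : α → α} (h : Function.Commute φ ψ)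
    (c : α → Bool) :
    Disjoint (φ ⁻¹' {x | c (φ x) = false ∧ c (ψ x) = true})
      (ψ ⁻¹' {x | c (φ x) = false ∧ c (ψ x) = true}) := by
  refine Set.disjoint_left.2 fun x hφx hψx => ?_
  have htrue : c (ψ (φ x)) = true := hφx.2
  have hfalse : c (φ (ψ x)) = false := hψx.1
  rw [h x, htrue] at hfalse
  exact Bool.noConfusion hfalse

theorem antitone_pairwise_disjoint_preimage {α ι : Type*} (f : ι → α → α) (t : Set ι) :
    Antitone fun B : Set α => t.Pairwise (Disjoint on fun k => f k ⁻¹' B) :=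
  fun _ _ hB'B hB =>
    hB.mono' fun _ _ h => h.mono (Set.preimage_mono hB'B) (Set.preimage_mono hB'B)

lemma ENNReal.le_of_five_mul_le_add_four_mul {a b : ℝ≥0∞} (ha : a ≠ ∞)
    (h : 5 * a ≤ a + 4 * b) : a ≤ b := by
  have h4 : a + 4 * a ≤ a + 4 * b := by rw [← one_add_mul]; norm_num; exact h
  exact (ENNReal.mul_le_mul_iff_right (by norm_num) (by norm_num)).1
    ((ENNReal.add_le_add_iff_left ha).1 h4)

section MeasureSpace

variable {X : Type*} [MeasurableSpace X]

open scoped Classical in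
theorem exists_measure_le_mul_of_card_le_mul_card {ι : Type*} [Fintype ι] [Nonempty ι]
    (μ : Measure X) {E : ι → Set X} (hE : ∀ i, MeasurableSet (E i)) {D : Set X}
    {c : ℝ≥0∞} (h : ∀ x ∈ D, (Fintype.card ι : ℝ≥0∞) ≤ c * #{i | x ∈ E i}) :
    ∃ i, μ D ≤ c * μ (E i) := by
  obtain ⟨i₀, -, hi₀⟩ := exists_max_image univ (fun i => μ (E i)) univ_nonempty
  have hind (i : ι) : Measurable ((E i).indicator (1 : X → ℝ≥0∞)) :=
    measurable_const.indicator (hE i)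
  have hsum : Measurable fun x => ∑ i, (E i).indicator (1 : X → ℝ≥0∞) x :=
    Finset.measurable_sum _ fun i _ => hind i
  refine ⟨i₀, (ENNReal.mul_le_mul_iff_right (a := Fintype.card ι) (by simp) (by simp)).1 ?_⟩
  calc (Fintype.card ι : ℝ≥0∞) * μ D = ∫⁻ _ in D, (Fintype.card ι : ℝ≥0∞) ∂μ :=
        (setLIntegral_const _ _).symm
    _ ≤ ∫⁻ x in D, c * ∑ i, (E i).indicator 1 x ∂μ :=
        setLIntegral_mono (hsum.const_mul c) fun x hx => by
          simpa [Set.indicator_apply, Finset.sum_boole] using h x hx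
    _ ≤ ∫⁻ x, c * ∑ i, (E i).indicator 1 x ∂μ := setLIntegral_le_lintegral _ _
    _ = c * ∑ i, μ (E i) := by
        rw [lintegral_const_mul _ hsum, lintegral_finsetSum _ fun i _ => hind i]
        simp [lintegral_indicator_one (hE _)]
    _ ≤ c * (Fintype.card ι * μ (E i₀)) := by
        gcongr
        simpa using Finset.sum_le_card_nsmul univ (fun i => μ (E i)) _ fun i hi => hi₀ i hi
    _ = Fintype.card ι * (c * μ (E i₀)) := by ring

theorem exists_subset_forall_of_forall_exists {ι : Type*} (μ : Measure X)
    (P : ι → Set X → Prop) (hP : ∀ i, Antitone (P i)) (c : ℝ≥0∞) (T : Finset ι)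
    (hstep : ∀ i ∈ T, ∀ B, MeasurableSet B →
      ∃ B' ⊆ B, MeasurableSet B' ∧ P i B' ∧ μ B ≤ c * μ B')
    {B : Set X} (hB : MeasurableSet B) :
    ∃ B' ⊆ B, MeasurableSet B' ∧ (∀ i ∈ T, P i B') ∧ μ B ≤ c ^ #T * μ B' := by
  classical
  induction T using Finset.induction_on generalizing B with
  | empty => exact ⟨B, subset_rfl, hB, by simp, by simp⟩
  | @insert i T hi ih =>
    obtain ⟨B₁, hB₁B, hB₁, hPT, hμ₁⟩ := ih (fun j hj => hstep j (mem_insert_of_mem hj)) hB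
    obtain ⟨B₂, hB₂B₁, hB₂, hPi, hμ₂⟩ := hstep i (mem_insert_self i T) B₁ hB₁
    refine ⟨B₂, hB₂B₁.trans hB₁B, hB₂, fun j hj => ?_, ?_⟩
    · rcases mem_insert.1 hj with rfl | hj
      · exact hPi
      · exact hP j hB₂B₁ (hPT j hj)
    · calc μ B ≤ c ^ #T * μ B₁ := hμ₁
        _ ≤ c ^ #T * (c * μ B₂) := by gcongr
        _ = c ^ #(insert i T) * μ B₂ := by rw [card_insert_of_notMem hi, pow_succ]; ring

section CountablyGenerated

variable [CountablyGenerated X]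

noncomputable def bitPrefix (s : ℕ) (x : X) : Fin s → Bool := fun i => mapNatBool X x i

theorem measurable_bitPrefix (s : ℕ) : Measurable (bitPrefix (X := X) s) :=
  measurable_pi_lambda _ fun i => (measurable_pi_apply (i : ℕ)).comp (measurable_mapNatBool X)

theorem tendsto_measure_setOf_bitPrefix_eq [SeparatesPoints X] (μ : Measure X)
    [IsFiniteMeasure μ] {φ ψ : X → X} (hφ : Measurable φ) (hψ : Measurable ψ) :
    Tendsto (fun s => μ {x | bitPrefix s (φ x) = bitPrefix s (ψ x)}) atTop
      (𝓝 (μ {x | φ x = ψ x})) := by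
  have hinter : ⋂ s, {x | bitPrefix s (φ x) = bitPrefix s (ψ x)} = {x | φ x = ψ x} := by
    refine Set.Subset.antisymm (fun x hx => ?_) fun x hx => ?_
    · refine injective_mapNatBool X (funext fun i => ?_)
      exact congrFun (Set.mem_iInter.1 hx (i + 1)) ⟨i, i.lt_add_one⟩
    · have hx' : φ x = ψ x := hx
      exact Set.mem_iInter.2 fun s => by simp [hx']
  rw [← hinter]
  refine tendsto_measure_iInter_atTop (fun s => ?_) (fun s t hst x hx => ?_)
    ⟨0, measure_ne_top μ _⟩
  · exact (measurableSet_eq_fun ((measurable_bitPrefix s).comp hφ)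
      ((measurable_bitPrefix s).comp hψ)).nullMeasurableSet
  · have hx' : bitPrefix t (φ x) = bitPrefix t (ψ x) := hx
    funext i
    exact congrFun hx' ⟨i, i.2.trans_le hst⟩

theorem exists_subset_disjoint_preimage_of_commute [SeparatesPoints X] (μ : Measure X)
    [IsFiniteMeasure μ] {φ ψ : X → X} (hφ : Measurable φ) (hψ : Measurable ψ)
    (hcomm : Function.Commute φ ψ) (hfree : μ {x | φ x = ψ x} = 0) {B : Set X}
    (hB : MeasurableSet B) :
    ∃ B' ⊆ B, MeasurableSet B' ∧ Disjoint (φ ⁻¹' B') (ψ ⁻¹' B') ∧ μ B ≤ 5 * μ B' := by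
  classical
  rcases eq_or_ne (μ B) 0 with hB0 | hB0
  · exact ⟨∅, Set.empty_subset _, .empty, by simp, by simp [hB0]⟩
  have hε : μ {x | φ x = ψ x} < μ B / 5 := hfree ▸ ENNReal.div_pos hB0 (by norm_num)
  obtain ⟨s, hs⟩ :=
    ((tendsto_measure_setOf_bitPrefix_eq μ hφ hψ).eventually_lt_const hε).exists
  set C := {x | bitPrefix s (φ x) = bitPrefix s (ψ x)}
  let E (g : (Fin s → Bool) → Bool) : Set X :=
    B ∩ {x | g (bitPrefix s (φ x)) = false ∧ g (bitPrefix s (ψ x)) = true}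
  have hE (g) : MeasurableSet (E g) := by
    have hc : Measurable fun x => g (bitPrefix s x) :=
      (measurable_of_countable g).comp (measurable_bitPrefix (X := X) s)
    exact hB.inter (((hc.comp hφ) (measurableSet_singleton false)).inter
      ((hc.comp hψ) (measurableSet_singleton true)))
  obtain ⟨g, hg⟩ := exists_measure_le_mul_of_card_le_mul_card μ hE (D := B \ C) (c := 4)
    fun x ⟨hxB, hxC⟩ => by
      have hcount := card_fun_bool_le_four_mul_card_filter hxC
      simp only [E, Set.mem_inter_iff, hxB, true_and, Set.mem_ofPred_eq]
      exact_mod_cast hcount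
  refine ⟨E g, Set.inter_subset_left, hE g,
    (disjoint_preimage_setOf_of_commute hcomm (g ∘ bitPrefix s)).mono
      (Set.preimage_mono Set.inter_subset_right) (Set.preimage_mono Set.inter_subset_right), ?_⟩
  have hB5 : μ B = 5 * (μ B / 5) := (ENNReal.mul_div_cancel (by norm_num) (by norm_num)).symm
  rw [hB5]
  gcongr
  refine ENNReal.le_of_five_mul_le_add_four_mul (ENNReal.div_ne_top (measure_ne_top μ B)
    (by norm_num)) ?_
  calc 5 * (μ B / 5) = μ B := hB5.symm
    _ ≤ μ (B ∩ C) + μ (B \ C) := measure_le_inter_add_sdiff μ B C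
    _ ≤ μ B / 5 + 4 * μ (E g) :=
        add_le_add ((measure_mono Set.inter_subset_right).trans hs.le) hg

section CommutingFamily

variable {ι : Type*} [SeparatesPoints X] (μ : Measure X) [IsFiniteMeasure μ]
  {f : ι → X → X} (hf : ∀ i, Measurable (f i)) (hcomm : ∀ i j, Function.Commute (f i) (f j))
  (hfree : ∀ i j, i ≠ j → μ {x | f i x = f j x} = 0)
include hf hcomm hfree

theorem exists_subset_pairwise_disjoint_preimage_of_card_eq_two {t : Finset ι} (ht : #t = 2)
    {B : Set X} (hB : MeasurableSet B) :
    ∃ B' ⊆ B, MeasurableSet B' ∧ (t : Set ι).Pairwise (Disjoint on fun k => f k ⁻¹' B') ∧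
      μ B ≤ 5 * μ B' := by
  classical
  obtain ⟨k, l, hkl, rfl⟩ := card_eq_two.1 ht
  obtain ⟨B', hB'B, hB', hdisj, hμ⟩ := exists_subset_disjoint_preimage_of_commute μ
    (hf k) (hf l) (hcomm k l) (hfree k l hkl) hB
  refine ⟨B', hB'B, hB', ?_, hμ⟩
  rw [coe_pair, Set.pairwise_pair]
  exact fun _ => ⟨hdisj, hdisj.symm⟩

theorem exists_subset_pairwise_disjoint_preimage (S : Finset ι) {B : Set X}
    (hB : MeasurableSet B) :
    ∃ B' ⊆ B, MeasurableSet B' ∧ (S : Set ι).Pairwise (Disjoint on fun k => f k ⁻¹' B') ∧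
      μ B ≤ 5 ^ (#S).choose 2 * μ B' := by
  classical
  obtain ⟨B', hB'B, hB', hpairs, hμ⟩ := exists_subset_forall_of_forall_exists μ _
    (fun t : Finset ι => antitone_pairwise_disjoint_preimage f t) 5 (S.powersetCard 2)
    (fun t ht _ hB => exists_subset_pairwise_disjoint_preimage_of_card_eq_two μ hf hcomm hfree
      (mem_powersetCard.1 ht).2 hB) hB
  refine ⟨B', hB'B, hB', fun k hk l hl hkl => ?_, by rwa [card_powersetCard] at hμ⟩
  have hpair : {k, l} ∈ S.powersetCard 2 :=
    mem_powersetCard.2 ⟨insert_subset hk (singleton_subset_iff.2 hl), card_pair hkl⟩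
  exact hpairs _ hpair (by simp) (by simp) hkl

end CommutingFamily

end CountablyGenerated

end MeasureSpace

theorem stmt_2_general {X : Type*} [MeasurableSpace X] [StandardBorelSpace X]
    (μ : Measure X) [IsProbabilityMeasure μ]
    {d : ℕ} (f : (Fin d → ℕ) → X → X)
    (hmp : ∀ n, MeasurePreserving (f n) μ μ)
    (h0 : f 0 = id)
    (hadd : ∀ m n, f (m + n) = f m ∘ f n)
    (hfree : ∀ k l : Fin d → ℕ, k ≠ l → μ {x | f k x = f l x} = 0)
    (n : Fin d → ℕ)
    (Y : Set X) (hY : MeasurableSet Y) :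
    ∃ N : Fin d → ℕ, ∃ B : Set X, MeasurableSet B ∧ B ⊆ f N ⁻¹' Y ∧
      (∀ k l : Fin d → ℕ, (∀ j, k j < n j) → (∀ j, l j < n j) → k ≠ l →
        f k ⁻¹' B ∩ f l ⁻¹' B = ∅) ∧
      μ Y / 5 ^ Nat.choose (∏ j, n j) 2 ≤ μ B := by
  have hcomm (k l) : Function.Commute (f k) (f l) := fun x => by
    rw [← comp_apply (f := f k), ← hadd, add_comm, hadd, comp_apply]
  obtain ⟨B, hBY, hB, hdisj, hμ⟩ := exists_subset_pairwise_disjoint_preimage μ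
    (fun k => (hmp k).measurable) hcomm hfree (Fintype.piFinset fun j => range (n j)) hY
  refine ⟨0, B, hB, by rwa [h0], fun k l hk hl hkl => ?_, ?_⟩
  · rw [← Set.disjoint_iff_inter_eq_empty]
    exact hdisj (by simpa using hk) (by simpa using hl) hkl
  · refine ENNReal.div_le_of_le_mul ?_
    simpa [Fintype.card_piFinset, mul_comm] using hμ

theorem stmt_2 {X : Type*} [MeasurableSpace X] [StandardBorelSpace X]
    (μ : Measure X) [IsProbabilityMeasure μ] [NullSingletonClass μ]
    {d : ℕ} (f : (Fin d → ℕ) → X → X)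
    (hmp : ∀ n, MeasurePreserving (f n) μ μ)
    (h0 : f 0 = id)
    (hadd : ∀ m n, f (m + n) = f m ∘ f n)
    (hfree : ∀ k l : Fin d → ℕ, k ≠ l → μ {x | f k x = f l x} = 0)
    (n : Fin d → ℕ) (hn : ∀ j, 0 < n j)
    (Y : Set X) (hY : MeasurableSet Y) :
    ∃ N : Fin d → ℕ, ∃ B : Set X, MeasurableSet B ∧ B ⊆ f N ⁻¹' Y ∧
      (∀ k l : Fin d → ℕ, (∀ j, k j < n j) → (∀ j, l j < n j) → k ≠ l →
        f k ⁻¹' B ∩ f l ⁻¹' B = ∅) ∧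
      μ Y / 5 ^ Nat.choose (∏ j, n j) 2 ≤ μ B :=
  stmt_2_general μ f hmp h0 hadd hfree n Y hY
end

section
/- (Rokhlin lemma for a single endomorphism.) Let T be a measure-preserving transformation on an atomless standard probability space (X,𝒳,μ) such that μ({x : T^m(x) = T^k(x)}) = 0 for all distinct m, k ∈ ℕ₀. Then for every ε > 0 and every n ∈ ℕ there exists a measurable set B such that B, T⁻¹(B), …, T^{-(n−1)}(B) are pairwise disjoint and their union has measure at least 1 − ε. -/
/-!
Fix an injective measurable `g : X → [0, 1]` and let `s x = limsup_i g (T^i x)`, a `T`-invariant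
function. A point of `{g = s}` can come back to this set only at a time where it is periodic, so by
Poincaré recurrence and freeness `{g = s}` is null. Every orbit enters each of the sets
`{|g - s| < 1/k}`, whose intersection is `{g = s}`, so there are sets `A` of arbitrarily small
measure met by every orbit. Take one with `μ A ≤ ε / n`, let `r` be the entry time into `A` and
`B = {r > 0, n ∣ r}`: the sets `T^{-i} B`, `i < n`, are pairwise disjoint, and their union misses
only points entering `A` before time `n`, a set of measure at most `n μ A ≤ ε`.
-/

open MeasureTheory ENNReal Filter Topology Function

section

variable {X : Type*}

lemma ENNReal.exists_limsup_lt_add_and_lt_limsup_add {u : ℕ → ℝ≥0∞}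
    (hu : limsup u atTop ≠ ∞) {η : ℝ≥0∞} (hη : η ≠ 0) :
    ∃ i, limsup u atTop < u i + η ∧ u i < limsup u atTop + η := by
  set L := limsup u atTop
  have hfreq : ∃ᶠ i in atTop, L < u i + η := by
    by_contra! h
    obtain ⟨i, hi⟩ := h.exists
    have hηL : η ≤ L := le_of_add_le_right hi
    have hle : L ≤ L - η := limsup_le_of_le (by isBoundedDefault)
      (h.mono fun i hi => ENNReal.le_sub_of_add_le_right (ne_top_of_le_ne_top hu hηL) hi)
    exact (ENNReal.sub_lt_self hu (pos_of_ne_zero hη |>.trans_le hηL).ne' hη).not_ge hle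
  have hev : ∀ᶠ i in atTop, u i < L + η := eventually_lt_of_limsup_lt (ENNReal.lt_add_right hu hη)
  exact (hfreq.and_eventually hev).exists

variable (X) in
lemma exists_measurable_injective_le_one [MeasurableSpace X] [StandardBorelSpace X] :
    ∃ g : X → ℝ≥0∞, Measurable g ∧ Injective g ∧ ∀ x, g x ≤ 1 := by
  refine ⟨fun x => ENNReal.ofReal (Real.sigmoid (embeddingReal X x)), by fun_prop, ?_,
    fun x => ENNReal.ofReal_le_one.2 (Real.sigmoid_le_one _)⟩
  intro x y hxy
  rw [ENNReal.ofReal_eq_ofReal_iff (Real.sigmoid_nonneg _) (Real.sigmoid_nonneg _)] at hxy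
  exact (measurableEmbedding_embeddingReal X).injective (Real.sigmoid_injective hxy)

def SweepsOut (T : X → X) (A : Set X) : Prop := ∀ x, ∃ i, T^[i] x ∈ A

noncomputable def orbitLimsup (T : X → X) (g : X → ℝ≥0∞) (x : X) : ℝ≥0∞ :=
  limsup (fun i => g (T^[i] x)) atTop

section orbitLimsup

variable {T : X → X} {g : X → ℝ≥0∞}

lemma orbitLimsup_iterate (x : X) (i : ℕ) : orbitLimsup T g (T^[i] x) = orbitLimsup T g x := by
  simp_rw [orbitLimsup, ← iterate_add_apply]
  exact limsup_nat_add (fun j => g (T^[j] x)) i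

lemma orbitLimsup_le {c : ℝ≥0∞} (hg : ∀ x, g x ≤ c) (x : X) : orbitLimsup T g x ≤ c :=
  show limsup _ _ ≤ c from limsup_le_of_le (by isBoundedDefault) (.of_forall fun _ => hg _)

lemma measurable_orbitLimsup [MeasurableSpace X] (hT : Measurable T) (hg : Measurable g) :
    Measurable (orbitLimsup T g) :=
  .limsup fun i => hg.comp (hT.iterate i)

lemma sweepsOut_setOf_lt_add_and_lt_add (hs : ∀ x, orbitLimsup T g x ≠ ∞) {η : ℝ≥0∞}
    (hη : η ≠ 0) :
    SweepsOut T {x | orbitLimsup T g x < g x + η ∧ g x < orbitLimsup T g x + η} := by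
  intro x
  obtain ⟨i, hi⟩ := ENNReal.exists_limsup_lt_add_and_lt_limsup_add (hs x) hη
  refine ⟨i, ?_⟩
  change _ ∧ _
  rw [orbitLimsup_iterate]
  exact hi

end orbitLimsup

namespace MeasureTheory.Conservative

variable [MeasurableSpace X] {μ : Measure X} {T : X → X}

lemma measure_eq_zero_of_iterate_mem_imp_eq (hT : Conservative T μ)
    (hap : ∀ᵐ x ∂μ, ∀ m ≠ 0, T^[m] x ≠ x) {S : Set X} (hS : NullMeasurableSet S μ)
    (hST : ∀ x ∈ S, ∀ m, T^[m] x ∈ S → T^[m] x = x) : μ S = 0 := by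
  rw [measure_eq_zero_iff_ae_notMem]
  filter_upwards [hT.ae_mem_imp_frequently_image_mem hS, hap] with x hrec hx hxS
  obtain ⟨m, hm, hmS⟩ := (hrec hxS).forall_exists_of_atTop 1
  exact hx m (by omega) (hST x hxS m hmS)

lemma measure_setOf_eq_orbitLimsup_eq_zero (hT : Conservative T μ)
    (hap : ∀ᵐ x ∂μ, ∀ m ≠ 0, T^[m] x ≠ x) {g : X → ℝ≥0∞} (hg : Measurable g)
    (hinj : Injective g) : μ {x | g x = orbitLimsup T g x} = 0 := by
  refine hT.measure_eq_zero_of_iterate_mem_imp_eq hap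
    (measurableSet_eq_fun hg (measurable_orbitLimsup hT.measurable hg)).nullMeasurableSet ?_
  intro x hx m hm
  apply hinj
  rw [(hm : g (T^[m] x) = _), (hx : g x = _), orbitLimsup_iterate]

theorem exists_measure_le_sweepsOut [StandardBorelSpace X] [IsFiniteMeasure μ]
    (hT : Conservative T μ) (hap : ∀ᵐ x ∂μ, ∀ m ≠ 0, T^[m] x ≠ x) {δ : ℝ≥0∞} (hδ : δ ≠ 0) :
    ∃ A, MeasurableSet A ∧ μ A ≤ δ ∧ SweepsOut T A := by
  obtain ⟨g, hg, hinj, hg_le⟩ := exists_measurable_injective_le_one X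
  set s := orbitLimsup T g
  have hs : Measurable s := measurable_orbitLimsup hT.measurable hg
  set A : ℕ → Set X := fun k => {x | s x < g x + (k : ℝ≥0∞)⁻¹ ∧ g x < s x + (k : ℝ≥0∞)⁻¹}
  have hA : ∀ k, MeasurableSet (A k) := fun k =>
    (measurableSet_lt hs (hg.add_const _)).inter (measurableSet_lt hg (hs.add_const _))
  have hanti : Antitone A := fun k l hkl x hx => by
    have : (l : ℝ≥0∞)⁻¹ ≤ (k : ℝ≥0∞)⁻¹ := ENNReal.inv_le_inv.2 (by exact_mod_cast hkl)
    exact ⟨hx.1.trans_le (by gcongr), hx.2.trans_le (by gcongr)⟩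
  have hle : ∀ a b : ℝ≥0∞, (∀ k : ℕ, a < b + (k : ℝ≥0∞)⁻¹) → a ≤ b := fun a b h =>
    ge_of_tendsto' (by simpa using ENNReal.tendsto_inv_nat_nhds_zero.const_add b) fun k => (h k).le
  have hinter : ⋂ k, A k ⊆ {x | g x = s x} := fun x hx => by
    simp only [Set.mem_iInter] at hx
    exact le_antisymm (hle _ _ fun k => (hx k).2) (hle _ _ fun k => (hx k).1)
  have htend : Tendsto (μ ∘ A) atTop (𝓝 0) := by
    have := tendsto_measure_iInter_atTop (fun k => (hA k).nullMeasurableSet) hanti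
      ⟨0, measure_ne_top μ _⟩
    rwa [measure_mono_null hinter (hT.measure_setOf_eq_orbitLimsup_eq_zero hap hg hinj)] at this
  obtain ⟨k, hk⟩ := (htend.eventually_lt_const (pos_of_ne_zero hδ)).exists
  exact ⟨A k, hA k, hk.le, sweepsOut_setOf_lt_add_and_lt_add
    (fun x => ne_top_of_le_ne_top one_ne_top (orbitLimsup_le hg_le x)) (by simp)⟩

end MeasureTheory.Conservative

namespace SweepsOut

variable {T : X → X} {A : Set X} (hA : SweepsOut T A)

open Classical in
noncomputable def entryTime (x : X) : ℕ := Nat.find (hA x)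

def towerBase (n : ℕ) : Set X := {x | 0 < hA.entryTime x ∧ n ∣ hA.entryTime x}

variable {x : X}

lemma iterate_entryTime_mem : T^[hA.entryTime x] x ∈ A := by
  classical exact Nat.find_spec (hA x)

lemma entryTime_eq_iff {m : ℕ} : hA.entryTime x = m ↔ T^[m] x ∈ A ∧ ∀ i < m, T^[i] x ∉ A := by
  classical exact Nat.find_eq_iff (hA x)

lemma entryTime_iterate {d : ℕ} (hd : d ≤ hA.entryTime x) :
    hA.entryTime (T^[d] x) = hA.entryTime x - d := by
  rw [entryTime_eq_iff, ← iterate_add_apply, Nat.sub_add_cancel hd]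
  refine ⟨hA.iterate_entryTime_mem, fun i hi => ?_⟩
  rw [← iterate_add_apply]
  exact ((hA.entryTime_eq_iff).1 rfl).2 _ (by omega)

lemma measurable_entryTime [MeasurableSpace X] (hT : Measurable T) (hAm : MeasurableSet A) :
    Measurable hA.entryTime := by
  classical exact measurable_find hA fun k => hAm.preimage (hT.iterate k)

lemma measurableSet_towerBase [MeasurableSpace X] (hT : Measurable T) (hAm : MeasurableSet A)
    (n : ℕ) : MeasurableSet (hA.towerBase n) :=
  show MeasurableSet (hA.entryTime ⁻¹' {m | 0 < m ∧ n ∣ m}) from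
    hA.measurable_entryTime hT hAm .of_discrete

lemma iterate_notMem_towerBase {n d : ℕ} (hx : x ∈ hA.towerBase n) (hd : 0 < d) (hdn : d < n) :
    T^[d] x ∉ hA.towerBase n := by
  rintro ⟨-, hdvd⟩
  obtain ⟨hpos, hn⟩ := hx
  have hle : d ≤ hA.entryTime x := hdn.le.trans (Nat.le_of_dvd hpos hn)
  rw [hA.entryTime_iterate hle] at hdvd
  have : n ∣ d := by simpa [Nat.sub_sub_self hle] using Nat.dvd_sub hn hdvd
  exact (Nat.le_of_dvd hd this).not_gt hdn

lemma iterate_preimage_towerBase_inter {n i j : ℕ} (hi : i < n) (hj : j < n) (hij : i ≠ j) :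
    T^[i] ⁻¹' hA.towerBase n ∩ T^[j] ⁻¹' hA.towerBase n = ∅ := by
  wlog hlt : i < j generalizing i j
  · rw [Set.inter_comm]
    exact this hj hi hij.symm (by omega)
  refine Set.eq_empty_of_forall_notMem fun x ⟨hxi, hxj⟩ => ?_
  refine hA.iterate_notMem_towerBase hxi (d := j - i) (by omega) (by omega) ?_
  rwa [← iterate_add_apply, Nat.sub_add_cancel hlt.le]

lemma compl_biUnion_iterate_preimage_towerBase_subset {n : ℕ} (hn : 0 < n) :
    (⋃ i ∈ Finset.range n, T^[i] ⁻¹' hA.towerBase n)ᶜ ⊆ ⋃ i ∈ Finset.range n, T^[i] ⁻¹' A := by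
  intro x hx
  by_cases hxn : hA.entryTime x < n
  · exact Set.mem_biUnion (Finset.mem_range.2 hxn) hA.iterate_entryTime_mem
  · refine absurd (Set.mem_biUnion (Finset.mem_range.2 (Nat.mod_lt (hA.entryTime x) hn)) ?_) hx
    rw [Set.mem_preimage, towerBase, Set.mem_ofPred_eq, hA.entryTime_iterate (Nat.mod_le _ _)]
    exact ⟨by have := Nat.mod_lt (hA.entryTime x) hn; omega, Nat.dvd_sub_mod _⟩

end SweepsOut

lemma MeasureTheory.MeasurePreserving.measure_biUnion_iterate_preimage_le [MeasurableSpace X]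
    {μ : Measure X} {T : X → X} (hT : MeasurePreserving T μ μ) {A : Set X}
    (hA : NullMeasurableSet A μ) (n : ℕ) :
    μ (⋃ i ∈ Finset.range n, T^[i] ⁻¹' A) ≤ n * μ A :=
  calc μ (⋃ i ∈ Finset.range n, T^[i] ⁻¹' A)
      ≤ ∑ i ∈ Finset.range n, μ (T^[i] ⁻¹' A) := measure_biUnion_finset_le _ _
    _ = n * μ A := by simp [(hT.iterate _).measure_preimage hA]

end

theorem stmt_5_general {X : Type*} [MeasurableSpace X] [StandardBorelSpace X]
    (μ : Measure X) [IsProbabilityMeasure μ]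
    (T : X → X) (hT : MeasurePreserving T μ μ)
    (hfree : ∀ m k : ℕ, m ≠ k → μ {x | T^[m] x = T^[k] x} = 0)
    (ε : ℝ≥0∞) (hε : 0 < ε) (n : ℕ) (hn : 0 < n) :
    ∃ B : Set X, MeasurableSet B ∧
      (∀ i j : ℕ, i < n → j < n → i ≠ j → T^[i] ⁻¹' B ∩ T^[j] ⁻¹' B = ∅) ∧
      1 - ε ≤ μ (⋃ i ∈ Finset.range n, T^[i] ⁻¹' B) := by
  have hap : ∀ᵐ x ∂μ, ∀ m ≠ 0, T^[m] x ≠ x := ae_all_iff.2 fun m => by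
    by_cases hm : m = 0
    · simp [hm]
    · filter_upwards [measure_eq_zero_iff_ae_notMem.1 (hfree m 0 hm)] with x hx _ using hx
  obtain ⟨A, hAm, hAμ, hA⟩ := hT.conservative.exists_measure_le_sweepsOut hap
    (ENNReal.div_pos_iff.2 ⟨hε.ne', natCast_ne_top n⟩).ne'
  set U := ⋃ i ∈ Finset.range n, T^[i] ⁻¹' hA.towerBase n
  have hUc : μ Uᶜ ≤ ε :=
    calc μ Uᶜ ≤ μ (⋃ i ∈ Finset.range n, T^[i] ⁻¹' A) :=
          measure_mono (hA.compl_biUnion_iterate_preimage_towerBase_subset hn)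
      _ ≤ n * (ε / n) := (hT.measure_biUnion_iterate_preimage_le hAm.nullMeasurableSet n).trans
          (by gcongr)
      _ ≤ ε := ENNReal.mul_div_le
  refine ⟨hA.towerBase n, hA.measurableSet_towerBase hT.measurable hAm n,
    fun i j => hA.iterate_preimage_towerBase_inter, ?_⟩
  rw [tsub_le_iff_right, ← measure_univ (μ := μ)]
  exact (measure_univ_le_add_compl U).trans (by gcongr)

theorem stmt_5 {X : Type*} [MeasurableSpace X] [StandardBorelSpace X]
    (μ : Measure X) [IsProbabilityMeasure μ] [NullSingletonClass μ]
    (T : X → X) (hT : MeasurePreserving T μ μ)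
    (hfree : ∀ m k : ℕ, m ≠ k → μ {x | T^[m] x = T^[k] x} = 0)
    (ε : ℝ≥0∞) (hε : 0 < ε) (n : ℕ) (hn : 0 < n) :
    ∃ B : Set X, MeasurableSet B ∧
      (∀ i j : ℕ, i < n → j < n → i ≠ j → T^[i] ⁻¹' B ∩ T^[j] ⁻¹' B = ∅) ∧
      1 - ε ≤ μ (⋃ i ∈ Finset.range n, T^[i] ⁻¹' B) :=
  stmt_5_general μ T hT hfree ε hε n hn
end

section
/- Let Q ⊆ ℤ^d be a finite set and D = Q − Q. Then ν(D) := sup{ δ̄(A) : A ⊆ ℤ^d, (A−A) ∩ D = ∅ } ≤ 1/|Q|, with equality if Q tiles ℤ^d (i.e., there exists S ⊆ ℤ^d with ℤ^d = ⊔_{r∈S} (Q + r)). -/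
/-!
If `A - A` meets `Q - Q` only in `0`, the translates `A + q`, `q ∈ Q`, are pairwise disjoint. With
`Q ⊆ [-M, M]^d` they all lie in `[-r-M, r+M)^d` when `A` is cut to `[-r, r)^d`, so
`|Q| · |A ∩ [-r, r)^d| ≤ (2(r + M))^d`, and letting `r → ∞` gives `δ̄(A) ≤ 1/|Q|`.
If `Q ⊕ S = ℤ^d`, uniqueness of the decomposition shows that `S` is such a set, and every point of
`[-r, r)^d` is `q + s` with `s ∈ S ∩ [-r-M, r+M)^d`, which gives the reverse bound `δ̄(S) ≥ 1/|Q|`.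
-/

open Filter

noncomputable def upperDensity {d : ℕ} (A : Set (Fin d → ℤ)) : ℝ :=
  limsup (fun r : ℕ =>
    (Nat.card ↥(A ∩ {x : Fin d → ℤ | ∀ i, -(r : ℤ) ≤ x i ∧ x i < (r : ℤ)}) : ℝ)
      / (2 * r) ^ d) atTop

open Finset Pointwise

section AdditiveCombinatorics

variable {G : Type*} [AddCommGroup G]

/-- `A - A` meets `Q - Q` only in `0`. -/
def AvoidsDifferences (A Q : Set G) : Prop :=
  ∀ a ∈ A, ∀ b ∈ A, ∀ q ∈ Q, ∀ q' ∈ Q, a - b = q - q' → q = q'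

def IsTiling (Q S : Set G) : Prop :=
  ∀ x : G, ∃! p : G × G, p.1 ∈ Q ∧ p.2 ∈ S ∧ x = p.1 + p.2

lemma IsTiling.avoidsDifferences {Q S : Set G} (hS : IsTiling Q S) : AvoidsDifferences S Q := by
  intro a ha b hb q hq q' hq' hab
  have hsum : q' + a = q + b := by rw [← sub_eq_sub_iff_add_eq_add.1 hab]; abel
  have hpair := (hS (q' + a)).unique (y₁ := (q', a)) (y₂ := (q, b)) ⟨hq', ha, rfl⟩ ⟨hq, hb, hsum⟩
  exact (congrArg Prod.fst hpair).symm

variable [DecidableEq G]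

lemma Finset.card_add_of_avoidsDifferences {B Q : Finset G}
    (h : AvoidsDifferences (B : Set G) Q) : #(B + Q) = #B * #Q := by
  refine card_add_iff.2 ?_
  rintro ⟨a, q⟩ ⟨ha, hq⟩ ⟨b, q'⟩ ⟨hb, hq'⟩ (hsum : a + q = b + q')
  obtain rfl : q' = q :=
    h a ha b hb q' hq' q hq (by rw [sub_eq_sub_iff_add_eq_add, hsum, add_comm])
  rw [add_right_cancel hsum]

end AdditiveCombinatorics

section Box

variable {d r M : ℕ} {x y : Fin d → ℤ}

noncomputable def centeredBox (d r : ℕ) : Finset (Fin d → ℤ) :=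
  Fintype.piFinset fun _ => Ico (-(r : ℤ)) r

lemma mem_centeredBox : x ∈ centeredBox d r ↔ ∀ i, -(r : ℤ) ≤ x i ∧ x i < r := by
  simp [centeredBox]

lemma card_centeredBox (d r : ℕ) : #(centeredBox d r) = (2 * r) ^ d := by
  simp only [centeredBox, Fintype.card_piFinset, Int.card_Ico, prod_const, card_univ,
    Fintype.card_fin]
  congr 1
  omega

lemma add_mem_centeredBox (hx : x ∈ centeredBox d r) (hy : ∀ i, |y i| ≤ M) :
    x + y ∈ centeredBox d (r + M) := by
  rw [mem_centeredBox] at hx ⊢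
  intro i
  have := hx i
  have := abs_le.1 (hy i)
  simp only [Pi.add_apply]
  push_cast
  omega

lemma sub_mem_centeredBox (hx : x ∈ centeredBox d r) (hy : ∀ i, |y i| ≤ M) :
    x - y ∈ centeredBox d (r + M) :=
  sub_eq_add_neg x y ▸ add_mem_centeredBox hx fun i => (abs_neg (y i)).trans_le (hy i)

lemma Finset.exists_forall_abs_le (Q : Finset (Fin d → ℤ)) :
    ∃ M : ℕ, ∀ q ∈ Q, ∀ i, |q i| ≤ M := by
  refine ⟨Q.sup fun q => univ.sup fun i => (q i).natAbs, fun q hq i => ?_⟩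
  rw [Int.abs_eq_natAbs, Nat.cast_le]
  exact (le_sup (f := fun i => (q i).natAbs) (mem_univ i)).trans
    (le_sup (f := fun q => univ.sup fun i => (q i).natAbs) hq)

end Box

section Density

variable {d : ℕ}

noncomputable def boxCount (A : Set (Fin d → ℤ)) (r : ℕ) : ℕ :=
  Nat.card ↥(A ∩ centeredBox d r)

lemma upperDensity_eq_limsup_boxCount (A : Set (Fin d → ℤ)) :
    upperDensity A = limsup (fun r : ℕ => (boxCount A r : ℝ) / (2 * r) ^ d) atTop := by
  simp only [upperDensity, boxCount, ← mem_centeredBox]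
  rfl

lemma boxCount_eq_card_filter (A : Set (Fin d → ℤ)) [DecidablePred (· ∈ A)] (r : ℕ) :
    boxCount A r = #{x ∈ centeredBox d r | x ∈ A} := by
  rw [boxCount, Nat.card_coe_set_eq, ← Set.ncard_coe_finset, coe_filter]
  simp only [mem_coe, Set.inter_def, and_comm]

lemma boxCount_le (A : Set (Fin d → ℤ)) (r : ℕ) : boxCount A r ≤ (2 * r) ^ d := by
  classical
  rw [boxCount_eq_card_filter, ← card_centeredBox]
  exact card_filter_le _ _

lemma boxCount_mul_card_le {A : Set (Fin d → ℤ)} {Q : Finset (Fin d → ℤ)} {M : ℕ}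
    (hA : AvoidsDifferences A Q) (hM : ∀ q ∈ Q, ∀ i, |q i| ≤ M) (r : ℕ) :
    boxCount A r * #Q ≤ (2 * (r + M)) ^ d := by
  classical
  have hB : AvoidsDifferences (↑{x ∈ centeredBox d r | x ∈ A} : Set (Fin d → ℤ)) Q :=
    fun a ha b hb => hA a (mem_filter.1 ha).2 b (mem_filter.1 hb).2
  rw [boxCount_eq_card_filter, ← card_add_of_avoidsDifferences hB, ← card_centeredBox]
  refine card_le_card (add_subset_iff.2 fun x hx q hq => ?_)
  exact add_mem_centeredBox (mem_filter.1 hx).1 (hM q hq)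

lemma le_boxCount_mul_card {S : Set (Fin d → ℤ)} {Q : Finset (Fin d → ℤ)} {M r : ℕ}
    (hS : IsTiling (Q : Set (Fin d → ℤ)) S) (hM : ∀ q ∈ Q, ∀ i, |q i| ≤ M) (hr : M ≤ r) :
    (2 * (r - M)) ^ d ≤ boxCount S r * #Q := by
  classical
  obtain ⟨k, rfl⟩ := Nat.exists_eq_add_of_le' hr
  rw [Nat.add_sub_cancel, boxCount_eq_card_filter, ← card_centeredBox]
  refine (card_le_card fun x hx => ?_).trans card_add_le
  obtain ⟨⟨q, s⟩, ⟨hq, hs, rfl⟩, -⟩ := hS x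
  rw [show q + s = s + q from add_comm q s]
  have hs' : s ∈ centeredBox d (k + M) := add_sub_cancel_left q s ▸ sub_mem_centeredBox hx (hM q hq)
  exact Finset.add_mem_add (mem_filter.2 ⟨hs', hs⟩) hq

end Density

section Limits

open Topology

variable {d : ℕ} {A : Set (Fin d → ℤ)} {n c : ℝ}

lemma tendsto_one_add_div_pow (c : ℝ) (d : ℕ) :
    Tendsto (fun r : ℕ => (1 + c / r) ^ d) atTop (𝓝 1) := by
  simpa using ((tendsto_const_div_atTop_nhds_zero_nat c).const_add 1).pow d

lemma boxCount_div_le_one (A : Set (Fin d → ℤ)) (r : ℕ) :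
    (boxCount A r : ℝ) / (2 * r) ^ d ≤ 1 :=
  div_le_one_of_le₀ (by exact_mod_cast boxCount_le A r) (by positivity)

lemma one_add_div_pow_div_eq {r : ℕ} (hr : r ≠ 0) :
    (1 + c / r) ^ d / n = (2 * (r + c)) ^ d / n / (2 * r) ^ d := by
  rw [div_right_comm, ← div_pow]
  congr 2
  field_simp

lemma upperDensity_le_of_eventually (hn : 0 < n)
    (h : ∀ᶠ r : ℕ in atTop, n * boxCount A r ≤ (2 * (r + c)) ^ d) :
    upperDensity A ≤ 1 / n := by
  have hlim := (tendsto_one_add_div_pow c d).div_const n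
  rw [upperDensity_eq_limsup_boxCount, ← hlim.limsup_eq]
  have hnonneg : ∀ r : ℕ, (0 : ℝ) ≤ boxCount A r / (2 * r) ^ d := fun r => by positivity
  refine limsup_le_limsup ?_
    (isBoundedUnder_of_eventually_ge (.of_forall hnonneg)).isCoboundedUnder_le
    hlim.isBoundedUnder_le
  filter_upwards [h, eventually_ne_atTop 0] with r hr hr0
  rw [one_add_div_pow_div_eq hr0, div_le_div_iff_of_pos_right (by positivity), le_div_iff₀' hn]
  exact hr

lemma le_upperDensity_of_eventually (hn : 0 < n)
    (h : ∀ᶠ r : ℕ in atTop, (2 * (r + c)) ^ d ≤ n * boxCount A r) :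
    1 / n ≤ upperDensity A := by
  have hlim := (tendsto_one_add_div_pow c d).div_const n
  rw [upperDensity_eq_limsup_boxCount, ← hlim.limsup_eq]
  refine limsup_le_limsup ?_ hlim.isCoboundedUnder_le
    (isBoundedUnder_of_eventually_le (.of_forall (boxCount_div_le_one A)))
  filter_upwards [h, eventually_ne_atTop 0] with r hr hr0
  rw [one_add_div_pow_div_eq hr0, div_le_div_iff_of_pos_right (by positivity), div_le_iff₀' hn]
  exact hr

end Limits

section Bounds

variable {d : ℕ} {Q : Finset (Fin d → ℤ)}

lemma upperDensity_le_of_avoidsDifferences (hQ : Q.Nonempty) {A : Set (Fin d → ℤ)}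
    (hA : AvoidsDifferences A Q) : upperDensity A ≤ 1 / #Q := by
  obtain ⟨M, hM⟩ := Q.exists_forall_abs_le
  refine upperDensity_le_of_eventually (c := M) (by exact_mod_cast hQ.card_pos)
    (.of_forall fun r => ?_)
  rw [mul_comm (#Q : ℝ)]
  exact_mod_cast boxCount_mul_card_le hA hM r

lemma one_div_card_le_upperDensity_of_isTiling (hQ : Q.Nonempty) {S : Set (Fin d → ℤ)}
    (hS : IsTiling (Q : Set (Fin d → ℤ)) S) : 1 / #Q ≤ upperDensity S := by
  obtain ⟨M, hM⟩ := Q.exists_forall_abs_le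
  refine le_upperDensity_of_eventually (c := -M) (by exact_mod_cast hQ.card_pos) ?_
  filter_upwards [eventually_ge_atTop M] with r hr
  rw [← sub_eq_add_neg, ← Nat.cast_sub hr, mul_comm (#Q : ℝ)]
  exact_mod_cast le_boxCount_mul_card hS hM hr

end Bounds

theorem stmt_17 {d : ℕ} (Q : Finset (Fin d → ℤ)) (hQ : Q.Nonempty)
    (D : Set (Fin d → ℤ))
    (hD : D = {w | ∃ q ∈ Q, ∃ q' ∈ Q, q ≠ q' ∧ w = q - q'}) :
    sSup {r : ℝ | ∃ A : Set (Fin d → ℤ),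
        (∀ a ∈ A, ∀ b ∈ A, a - b ∉ D) ∧ r = upperDensity A} ≤ 1 / Q.card ∧
    ((∃ S : Set (Fin d → ℤ), ∀ x : Fin d → ℤ,
        ∃! p : (Fin d → ℤ) × (Fin d → ℤ), p.1 ∈ Q ∧ p.2 ∈ S ∧ x = p.1 + p.2) →
      sSup {r : ℝ | ∃ A : Set (Fin d → ℤ),
        (∀ a ∈ A, ∀ b ∈ A, a - b ∉ D) ∧ r = upperDensity A} = 1 / Q.card) := by
  have hD' : ∀ A : Set (Fin d → ℤ),
      (∀ a ∈ A, ∀ b ∈ A, a - b ∉ D) ↔ AvoidsDifferences A Q := by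
    subst hD
    refine fun A => forall₂_congr fun a _ => forall₂_congr fun b _ => ?_
    simp only [Set.mem_ofPred_eq, not_exists, not_and, mem_coe]
    exact forall₂_congr fun q _ => forall₂_congr fun q' _ => by rw [Ne, not_imp_comm, not_not]
  have hub : ∀ r ∈ {r : ℝ | ∃ A : Set (Fin d → ℤ),
      (∀ a ∈ A, ∀ b ∈ A, a - b ∉ D) ∧ r = upperDensity A}, r ≤ 1 / #Q := by
    rintro _ ⟨A, hA, rfl⟩
    exact upperDensity_le_of_avoidsDifferences hQ ((hD' A).1 hA)
  refine ⟨Real.sSup_le hub (by positivity), fun ⟨S, hS⟩ => ?_⟩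
  refine le_antisymm (Real.sSup_le hub (by positivity)) ?_
  exact (one_div_card_le_upperDensity_of_isTiling hQ hS).trans
    (le_csSup ⟨_, hub⟩ ⟨S, (hD' S).2 (IsTiling.avoidsDifferences hS), rfl⟩)
end

section
/- Let f be a measure-preserving action of ℕ₀^d on a probability space (X,𝒳,μ), let n ∈ ℕ^d, and let A be a 2n-admissible set (where 2n = (2n(1),…,2n(d))). Then B = ⊔_{t ∈ {0,1}^d} f_{(t₁n(1),…,t_d n(d))}⁻¹(A) is n-admissible and μ(B_{(n)}) = μ(A_{(2n)}). -/
open MeasureTheory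

theorem stmt_18 {X : Type*} [MeasurableSpace X]
    (μ : Measure X) [IsProbabilityMeasure μ]
    {d : ℕ} (f : (Fin d → ℕ) → X → X)
    (hmp : ∀ n, MeasurePreserving (f n) μ μ)
    (h0 : f 0 = id)
    (hadd : ∀ m n, f (m + n) = f m ∘ f n)
    (n : Fin d → ℕ) (hn : ∀ j, 0 < n j)
    (A : Set X) (hA : MeasurableSet A)
    (hAadm : ∀ k l : Fin d → ℕ, (∀ j, k j < 2 * n j) → (∀ j, l j < 2 * n j) →
      k ≠ l → f k ⁻¹' A ∩ f l ⁻¹' A = ∅)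
    (B : Set X)
    (hB : B = ⋃ t : Fin d → Bool, f (fun i => if t i then n i else 0) ⁻¹' A) :
    (∀ k l : Fin d → ℕ, (∀ j, k j < n j) → (∀ j, l j < n j) → k ≠ l →
      f k ⁻¹' B ∩ f l ⁻¹' B = ∅) ∧
    μ (⋃ k ∈ {k : Fin d → ℕ | ∀ j, k j < n j}, f k ⁻¹' B) =
      μ (⋃ k ∈ {k : Fin d → ℕ | ∀ j, k j < 2 * n j}, f k ⁻¹' A) := by
  have key : ∀ k : Fin d → ℕ, f k ⁻¹' B =
      ⋃ t : Fin d → Bool, f ((fun i => if t i then n i else 0) + k) ⁻¹' A := by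
    intro k
    subst hB
    rw [Set.preimage_iUnion]
    refine Set.iUnion_congr fun t => ?_
    rw [hadd]
    rfl
  constructor
  · intro k l hk hl hne
    ext x
    simp only [Set.mem_inter_iff, Set.mem_empty_iff_false, iff_false, not_and]
    intro hx1 hx2
    rw [key k] at hx1
    rw [key l] at hx2
    obtain ⟨t, ht⟩ := Set.mem_iUnion.1 hx1
    obtain ⟨s, hs⟩ := Set.mem_iUnion.1 hx2
    have hne' : (fun i => if t i then n i else 0) + k ≠
        (fun i => if s i then n i else 0) + l := by
      intro h
      apply hne
      funext j
      have hj := congrFun h j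
      simp only [Pi.add_apply] at hj
      have hkj := hk j
      have hlj := hl j
      split_ifs at hj <;> omega
    have hempty := hAadm _ _
      (fun j => by have := hk j; simp only [Pi.add_apply]; split <;> omega)
      (fun j => by have := hl j; simp only [Pi.add_apply]; split <;> omega) hne'
    have hx : x ∈ (∅ : Set X) := hempty ▸ Set.mem_inter ht hs
    exact hx
  · congr 1
    ext x
    simp only [Set.mem_iUnion, Set.mem_setOf_eq]
    constructor
    · rintro ⟨k, hk, hx⟩
      rw [key k] at hx
      obtain ⟨t, ht⟩ := Set.mem_iUnion.1 hx
      exact ⟨_, fun j => by have := hk j; simp only [Pi.add_apply]; split <;> omega, ht⟩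
    · rintro ⟨m, hm, hx⟩
      refine ⟨fun j => m j - (if n j ≤ m j then n j else 0), fun j => ?_, ?_⟩
      · have := hm j; have := hn j; dsimp only; split <;> omega
      · rw [key]
        refine Set.mem_iUnion.2 ⟨fun j => decide (n j ≤ m j), ?_⟩
        have heq : ((fun i => if decide (n i ≤ m i) = true then n i else 0) +
            fun j => m j - if n j ≤ m j then n j else 0) = m := by
          funext j
          simp only [Pi.add_apply, decide_eq_true_eq]
          have := hm j
          split <;> omega
        rw [heq]
        exact hx
end
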